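/- For every optimal conditional machine U there exists a constant c ∈ ℕ such that for every string x there is a string p with U(p, Λ) = x, |p| = C(x), and C(p|x) ≤ c · log C(x). -/

import Mathlib

/-- A string is a finite binary string. -/
abbrev Str : Type := List Bool

/-- A conditional machine: a partial computable function mapping a pair of
strings `(p, y)` to a string. -/
abbrev CondMachine : Type := {V : Str × Str →. Str // Partrec V}

/-- `condC V x y` is `C_V(x|y)`: the least length of a program `p` with
`V (p, y) = x`, as an element of `ℕ∞` (it is `⊤` if no such `p` exists). -/
noncomputable def condC (V : CondMachine) (x y : Str) : ℕ∞ :=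
  sInf {n : ℕ∞ | ∃ p : Str, x ∈ V.1 (p, y) ∧ (p.length : ℕ∞) = n}

/-- A conditional machine `U` is optimal if for every conditional machine `V`
there is a constant `d` with `C_U(x|y) ≤ C_V(x|y) + d` for all `x, y`. -/
def OptimalMachine (U : CondMachine) : Prop :=
  ∀ V : CondMachine, ∃ d : ℕ, ∀ x y : Str, condC U x y ≤ condC V x y + (d : ℕ∞)

/-- For an optimal machine all complexities are finite natural numbers. -/
noncomputable def KC (U : CondMachine) (x y : Str) : ℕ := (condC U x y).toNat

/-- `log2 n = Nat.log 2 (n + 2)`, so `log2 n ≥ 1`. -/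
def log2 (n : ℕ) : ℕ := Nat.log 2 (n + 2)

/-!
Let `m = C(x)`. Given the binary expansion of `m` and the string `x`, one can dovetail
over all programs of length `m` and halt on the first `p` found with `U(p, Λ) = x`; such a
`p` is a shortest description of `x`. This search is a conditional machine, so optimality
of `U` gives `C(p|x) ≤ |bin m| + O(1) = O(log C(x))`.
-/

open Encodable Nat.Partrec Nat.Partrec.Code

section Inverse

variable {α β : Type*} [Primcodable α] [Primcodable β]

/-- Stage `k = ⟪n, s⟫` of the dovetailed search: accept `decode n` if `c` outputs `b` on it
within `s` steps. -/
def inverseSearchStep (c : Code) (b : β) (k : ℕ) : Option α :=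
  (decode k.unpair.1).bind fun a =>
    if evaln k.unpair.2 c (encode a) = some (encode b) then some a else none

theorem mem_inverseSearchStep {c : Code} {b : β} {k : ℕ} {a : α} :
    a ∈ inverseSearchStep c b k ↔
      decode k.unpair.1 = some a ∧ encode b ∈ evaln k.unpair.2 c (encode a) := by
  simp only [inverseSearchStep, Option.mem_def, Option.bind_eq_some_iff]
  constructor
  · rintro ⟨a', hdec, hif⟩
    split_ifs at hif with heval
    cases hif
    exact ⟨hdec, heval⟩
  · rintro ⟨hdec, heval⟩
    exact ⟨a, hdec, if_pos heval⟩

theorem primrec_inverseSearchStep (c : Code) :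
    Primrec₂ (inverseSearchStep (α := α) (β := β) c) := by
  have hdecode : Primrec fun bk : β × ℕ => (decode bk.2.unpair.1 : Option α) :=
    Primrec.decode.comp (Primrec.fst.comp (Primrec.unpair.comp Primrec.snd))
  have hevaln : Primrec fun x : (β × ℕ) × α => evaln x.1.2.unpair.2 c (encode x.2) :=
    primrec_evaln.comp
      (((Primrec.snd.comp (Primrec.unpair.comp (Primrec.snd.comp Primrec.fst))).pair
        (Primrec.const c)).pair (Primrec.encode.comp Primrec.snd))
  have htarget : Primrec fun x : (β × ℕ) × α => (some (encode x.1.1) : Option ℕ) :=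
    Primrec.option_some.comp (Primrec.encode.comp (Primrec.fst.comp Primrec.fst))
  exact Primrec.option_bind hdecode <| Primrec.to₂ <|
    Primrec.ite (Primrec.eq.comp hevaln htarget) (Primrec.option_some.comp Primrec.snd)
      (Primrec.const none)

theorem Partrec.exists_partrec_inverse {f : α →. β} (hf : Partrec f) :
    ∃ g : β →. α, Partrec g ∧ (∀ b a, a ∈ g b → b ∈ f a) ∧ ∀ b a, b ∈ f a → (g b).Dom := by
  obtain ⟨c, hc⟩ := exists_code.1 hf
  have hmem_eval {a : α} {b : β} : encode b ∈ eval c (encode a) ↔ b ∈ f a := by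
    simp [hc, encodek, encode_injective.eq_iff]
  refine ⟨fun b => Nat.rfindOpt (inverseSearchStep c b),
    Partrec.rfindOpt (primrec_inverseSearchStep c).to_comp, fun b a ha => ?_, fun b a hba => ?_⟩
  · obtain ⟨k, hk⟩ := Nat.rfindOpt_spec ha
    exact hmem_eval.1 (evaln_sound (mem_inverseSearchStep.1 hk).2)
  · obtain ⟨s, hs⟩ := evaln_complete.1 (hmem_eval.2 hba)
    exact Nat.rfindOpt_dom.2
      ⟨Nat.pair (encode a) s, a, mem_inverseSearchStep.2 (by simpa using hs)⟩

end Inverse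

def natOfBits (l : List Bool) : ℕ := l.foldr (fun b n => 2 * n + cond b 1 0) 0

theorem natOfBits_bits (n : ℕ) : natOfBits (Nat.bits n) = n := by
  induction n using Nat.binaryRec' with
  | zero => simp [natOfBits]
  | bit b n h ih =>
    rw [Nat.bits_append_bit n b h]
    simp only [natOfBits, List.foldr_cons] at ih ⊢
    rw [ih]
    cases b <;> simp [Nat.bit]

theorem primrec_natOfBits : Primrec natOfBits :=
  Primrec.list_foldr Primrec.id (Primrec.const 0) <| Primrec.to₂ <|
    Primrec.nat_add.comp
      (Primrec.nat_mul.comp (Primrec.const 2) (Primrec.snd.comp Primrec.snd))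
      (Primrec.cond (Primrec.fst.comp Primrec.snd) (Primrec.const 1) (Primrec.const 0))

theorem one_le_log2 (n : ℕ) : 1 ≤ log2 n := Nat.log_pos one_lt_two (by omega)

theorem length_bits_le_two_mul_log2 (n : ℕ) : (Nat.bits n).length ≤ 2 * log2 n := by
  have hsize : (Nat.bits n).length ≤ Nat.log 2 n + 1 := by
    rw [Nat.size_eq_bits_len]
    exact Nat.size_le.2 (Nat.lt_pow_succ_log_self one_lt_two n)
  have hlog : Nat.log 2 n ≤ log2 n := Nat.log_mono_right (by omega)
  linarith [one_le_log2 n]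

section Complexity

variable {V : CondMachine} {x y p : Str}

theorem condC_le_length (h : x ∈ V.1 (p, y)) : condC V x y ≤ p.length :=
  sInf_le ⟨p, h, rfl⟩

theorem exists_length_eq_condC (h : condC V x y ≠ ⊤) :
    ∃ p, x ∈ V.1 (p, y) ∧ (p.length : ℕ∞) = condC V x y := by
  have hne : {n : ℕ∞ | ∃ p : Str, x ∈ V.1 (p, y) ∧ (p.length : ℕ∞) = n}.Nonempty :=
    Set.nonempty_iff_ne_empty.2 fun hempty => h (by rw [condC, hempty, sInf_empty])
  exact csInf_mem hne

def idMachine : CondMachine := ⟨fun a => Part.some a.1, Computable.fst⟩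

theorem OptimalMachine.condC_ne_top {U : CondMachine} (hU : OptimalMachine U) (x y : Str) :
    condC U x y ≠ ⊤ := by
  obtain ⟨d, hd⟩ := hU idMachine
  have hlen : condC idMachine x y ≤ x.length := condC_le_length (Part.mem_some x)
  exact ne_top_of_le_ne_top (by simp) ((hd x y).trans (add_le_add_left hlen _))

theorem OptimalMachine.exists_length_eq_KC {U : CondMachine} (hU : OptimalMachine U) (x y : Str) :
    ∃ p, x ∈ U.1 (p, y) ∧ p.length = KC U x y := by
  obtain ⟨p, hp, hlen⟩ := exists_length_eq_condC (OptimalMachine.condC_ne_top hU x y)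
  exact ⟨p, hp, by rw [KC, ← hlen, ENat.toNat_natCast]⟩

theorem OptimalMachine.exists_KC_le {U : CondMachine} (hU : OptimalMachine U) (V : CondMachine) :
    ∃ d : ℕ, ∀ x y p, x ∈ V.1 (p, y) → KC U x y ≤ p.length + d := by
  obtain ⟨d, hd⟩ := hU V
  refine ⟨d, fun x y p hp => ENat.toNat_le_of_le_natCast ?_⟩
  push_cast
  exact (hd x y).trans (by gcongr; exact condC_le_length hp)

end Complexity

theorem exists_machine_finding_description_of_length (U : CondMachine) :
    ∃ S : CondMachine, ∀ n x, (∃ p, x ∈ U.1 (p, []) ∧ p.length = n) →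
      ∃ p, p ∈ S.1 (Nat.bits n, x) ∧ x ∈ U.1 (p, []) ∧ p.length = n := by
  have hf : Partrec fun p : Str => (U.1 (p, [])).map fun x => (p.length, x) :=
    Partrec.map (U.2.comp (Computable.pair Computable.id (Computable.const [])))
      ((Computable.list_length.comp Computable.fst).pair Computable.snd).to₂
  obtain ⟨g, hg, hg_mem, hg_dom⟩ := Partrec.exists_partrec_inverse hf
  refine ⟨⟨fun qx => g (natOfBits qx.1, qx.2),
    hg.comp ((primrec_natOfBits.to_comp.comp Computable.fst).pair Computable.snd)⟩, ?_⟩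
  rintro n x ⟨p₀, hp₀, rfl⟩
  obtain ⟨p, hp⟩ := Part.dom_iff_mem.1 (hg_dom _ p₀ (Part.mem_map _ hp₀))
  refine ⟨p, by simpa [natOfBits_bits] using hp, ?_⟩
  obtain ⟨x', hx', hpair⟩ := (Part.mem_map_iff _).1 (hg_mem _ _ hp)
  obtain ⟨hlen, rfl⟩ := Prod.mk.inj hpair
  exact ⟨hx', hlen⟩

/-- Every string `x` has a shortest description `p` with `C(p|x) = O(log C(x))`. -/
theorem exists_shortest_description_simple (U : CondMachine) (hU : OptimalMachine U) :
    ∃ c : ℕ, ∀ x : Str, ∃ p : Str,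
      x ∈ U.1 (p, []) ∧ p.length = KC U x [] ∧ KC U p x ≤ c * log2 (KC U x []) := by
  obtain ⟨S, hS⟩ := exists_machine_finding_description_of_length U
  obtain ⟨d, hd⟩ := OptimalMachine.exists_KC_le hU S
  refine ⟨d + 2, fun x => ?_⟩
  obtain ⟨p, hpS, hpx, hplen⟩ := hS _ x (OptimalMachine.exists_length_eq_KC hU x [])
  refine ⟨p, hpx, hplen, ?_⟩
  calc KC U p x ≤ (Nat.bits (KC U x [])).length + d := hd p x _ hpS
    _ ≤ 2 * log2 (KC U x []) + d := by gcongr; exact length_bits_le_two_mul_log2 _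
    _ ≤ (d + 2) * log2 (KC U x []) := by nlinarith [one_le_log2 (KC U x [])]
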